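/- (Stationary exact value-difference identity with remainder.) Let X be a finite nonempty set and D a finite set of actions with baseline 0, β ∈ ℝ, ρ ≥ 1. Let V : X → ℝ, v : D × X → ℝ, u : D × X → ℝ, e : D × X → ℝ, f : D × X → X → ℝ satisfy, for all d, x: (i) V(x) = v(d, x) + e(d, x) and (ii) v(d, x) = u(d, x) + β Σ_{x'} f(x' | d, x) V(x'). For s = 1, …, ρ let w_s : D × X → ℝ satisfy Σ_{d ∈ D} w_s(d, x) = 1 for all x, let F(w_s) be the X×X matrix with (x, x') entry Σ_{d} w_s(d, x) f(x' | d, x), and let c(w_s) : X → ℝ be c(w_s)(x) = Σ_{d} w_s(d, x) (u(d, x) + e(d, x)). Write f̃(· | d, x) = f(· | d, x) − f(· | 0, x), ũ(d, x) = u(d, x) − u(0, x), ṽ(d, x) = v(d, x) − v(0, x). Then for all d ∈ D, x ∈ X: ṽ(d, x) = ũ(d, x) + Σ_{τ=1}^{ρ} β^τ f̃(· | d, x)ᵀ ( F(w_1) ⋯ F(w_{τ−1}) ) c(w_τ) + β^{ρ+1} f̃(· | d, x)ᵀ ( F(w_1) ⋯ F(w_ρ) ) V, where the empty matrix product (τ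 = 1) is the identity matrix. -/

import Mathlib

open Matrix

/-- The `w`-weighted one-step transition matrix with `(x, x')` entry
`Σ_d w(d, x) f(x' | d, x)`. -/
noncomputable def statTransMatrix {X D : Type*} [Fintype X] [Fintype D]
    (f : D → X → X → ℝ) (w : D → X → ℝ) : Matrix X X ℝ :=
  Matrix.of fun x x' => ∑ d : D, w d x * f d x x'

/-- The partial products `F(w₁) ⋯ F(w_k)` of weighted transition matrices; the empty
product (`k = 0`) is the identity matrix. -/
noncomputable def prodTransMatrix {X D : Type*} [Fintype X] [DecidableEq X]
    [Fintype D] (f : D → X → X → ℝ) (ws : ℕ → D → X → ℝ) : ℕ → Matrix X X ℝ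
  | 0 => 1
  | (k + 1) => prodTransMatrix f ws k * statTransMatrix f (ws (k + 1))

/-- The `w`-weighted vector `c(w)` with entry `Σ_d w(d, x) (u(d, x) + e(d, x))`. -/
noncomputable def weightedPayoff {X D : Type*} [Fintype D]
    (u e : D → X → ℝ) (w : D → X → ℝ) : X → ℝ :=
  fun x => ∑ d : D, w d x * (u d x + e d x)

/-!
Subtracting the Bellman equations of `d` and `d₀` gives
`ṽ(d,x) = ũ(d,x) + β f̃(·|d,x)ᵀ V`. Averaging `V = u + e + β f V` over the actions with
weights `w` that sum to one gives `V = c(w) + β F(w) V`; substituting this for `V` in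
`f̃ᵀ F(w₁) ⋯ F(w_{τ-1}) V`, for `τ = 1, …, ρ`, produces the identity.
-/

section ValueIteration

variable {X D : Type*} [Fintype X]

lemma choiceValue_sub_eq_of_bellman {V : X → ℝ} {v u : D → X → ℝ} {f : D → X → X → ℝ}
    {β : ℝ} (hBellman : ∀ d x, v d x = u d x + β * (f d x ⬝ᵥ V))
    (d d₀ : D) (x : X) :
    v d x - v d₀ x = (u d x - u d₀ x) + β * ((f d x - f d₀ x) ⬝ᵥ V) := by
  rw [hBellman, hBellman, sub_dotProduct]
  ring

variable [Fintype D]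

lemma eq_weightedPayoff_add_smul_mulVec {V : X → ℝ} {u e : D → X → ℝ} {f : D → X → X → ℝ}
    {β : ℝ} (hV : ∀ d x, V x = u d x + e d x + β * (f d x ⬝ᵥ V))
    {w : D → X → ℝ} (hw : ∀ x, ∑ d, w d x = 1) :
    V = weightedPayoff u e w + β • (statTransMatrix f w *ᵥ V) := by
  ext x
  have hF : (statTransMatrix f w *ᵥ V) x = ∑ d, w d x * (f d x ⬝ᵥ V) := by
    simp only [mulVec, dotProduct, statTransMatrix, of_apply, Finset.sum_mul,
      Finset.mul_sum, mul_assoc]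
    exact Finset.sum_comm
  calc V x = ∑ d, w d x * V x := by rw [← Finset.sum_mul, hw, one_mul]
    _ = ∑ d, w d x * (u d x + e d x) + β * ∑ d, w d x * (f d x ⬝ᵥ V) := by
      simp only [Finset.mul_sum, ← Finset.sum_add_distrib]
      exact Finset.sum_congr rfl fun d _ => by rw [hV d x]; ring
    _ = _ := by rw [← hF]; rfl

variable [DecidableEq X]

lemma dotProduct_eq_sum_add_pow_mul_prodTransMatrix {V : X → ℝ} {u e : D → X → ℝ}
    {f : D → X → X → ℝ} {β : ℝ} {ws : ℕ → D → X → ℝ} {k : ℕ}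
    (hV : ∀ s, 1 ≤ s → s ≤ k →
      V = weightedPayoff u e (ws s) + β • (statTransMatrix f (ws s) *ᵥ V))
    (g : X → ℝ) :
    g ⬝ᵥ V = ∑ τ ∈ Finset.range k,
        β ^ τ * ((g ᵥ* prodTransMatrix f ws τ) ⬝ᵥ weightedPayoff u e (ws (τ + 1)))
      + β ^ k * ((g ᵥ* prodTransMatrix f ws k) ⬝ᵥ V) := by
  induction k with
  | zero => simp [prodTransMatrix]
  | succ k ih =>
    have step : (g ᵥ* prodTransMatrix f ws k) ⬝ᵥ V
        = (g ᵥ* prodTransMatrix f ws k) ⬝ᵥ weightedPayoff u e (ws (k + 1))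
          + β * ((g ᵥ* prodTransMatrix f ws (k + 1)) ⬝ᵥ V) := by
      conv_lhs => rw [hV (k + 1) le_add_self le_rfl]
      rw [dotProduct_add, dotProduct_smul, dotProduct_mulVec, vecMul_vecMul, smul_eq_mul]
      rfl
    rw [ih fun s h1 h2 => hV s h1 (h2.trans k.le_succ), step, Finset.sum_range_succ]
    ring

end ValueIteration

theorem stationary_exact_value_difference_identity_general
    {X D : Type*} [Fintype X] [DecidableEq X] [Fintype D]
    (d₀ : D) (β : ℝ) (ρ : ℕ)
    (V : X → ℝ) (v : D → X → ℝ) (u : D → X → ℝ) (e : D → X → ℝ)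
    (f : D → X → X → ℝ)
    (hAM : ∀ (d : D) (x : X), V x = v d x + e d x)
    (hBellman : ∀ (d : D) (x : X),
      v d x = u d x + β * ∑ x' : X, f d x x' * V x')
    (ws : ℕ → D → X → ℝ)
    (hw : ∀ s, 1 ≤ s → s ≤ ρ → ∀ x : X, ∑ d : D, ws s d x = 1) :
    ∀ (d : D) (x : X),
      v d x - v d₀ x = (u d x - u d₀ x)
        + (∑ τ ∈ Finset.range ρ, β ^ (τ + 1) *
            ∑ x' : X,
              ((fun x₁ => f d x x₁ - f d₀ x x₁) ᵥ* prodTransMatrix f ws τ) x' *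
                weightedPayoff u e (ws (τ + 1)) x')
        + β ^ (ρ + 1) *
            ∑ x' : X,
              ((fun x₁ => f d x x₁ - f d₀ x x₁) ᵥ* prodTransMatrix f ws ρ) x' * V x' := by
  intro d x
  have hV : ∀ d x, V x = u d x + e d x + β * (f d x ⬝ᵥ V) := fun d x => by
    rw [hAM d x, hBellman d x, dotProduct]
    ring
  have hIter := dotProduct_eq_sum_add_pow_mul_prodTransMatrix
    (fun s h1 h2 => eq_weightedPayoff_add_smul_mulVec hV (hw s h1 h2)) (f d x - f d₀ x)
  rw [choiceValue_sub_eq_of_bellman hBellman d d₀ x, hIter, mul_add, Finset.mul_sum,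
    add_assoc]
  simp only [← mul_assoc, ← pow_succ']
  rfl

/-- Stationary exact value-difference identity with remainder: iterating the weighted
value identity `V = c(w) + β F(w) V` forward ρ periods inside the one-step
value-difference identity `ṽ(d,x) = ũ(d,x) + β f̃(·|d,x)ᵀ V` yields ρ periods of
weighted payoffs plus a `β^(ρ+1)`-discounted remainder involving `V`. -/
theorem stationary_exact_value_difference_identity
    {X D : Type*} [Fintype X] [DecidableEq X] [Nonempty X] [Fintype D]
    (d₀ : D) (β : ℝ) (ρ : ℕ) (hρ : 1 ≤ ρ)
    (V : X → ℝ) (v : D → X → ℝ) (u : D → X → ℝ) (e : D → X → ℝ)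
    (f : D → X → X → ℝ)
    (hAM : ∀ (d : D) (x : X), V x = v d x + e d x)
    (hBellman : ∀ (d : D) (x : X),
      v d x = u d x + β * ∑ x' : X, f d x x' * V x')
    (ws : ℕ → D → X → ℝ)
    (hw : ∀ s, 1 ≤ s → s ≤ ρ → ∀ x : X, ∑ d : D, ws s d x = 1) :
    ∀ (d : D) (x : X),
      v d x - v d₀ x = (u d x - u d₀ x)
        + (∑ τ ∈ Finset.range ρ, β ^ (τ + 1) *
            ∑ x' : X,
              ((fun x₁ => f d x x₁ - f d₀ x x₁) ᵥ* prodTransMatrix f ws τ) x' *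
                weightedPayoff u e (ws (τ + 1)) x')
        + β ^ (ρ + 1) *
            ∑ x' : X,
              ((fun x₁ => f d x x₁ - f d₀ x x₁) ᵥ* prodTransMatrix f ws ρ) x' * V x' :=
  stationary_exact_value_difference_identity_general d₀ β ρ V v u e f hAM hBellman ws hw
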